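/- arXiv:1512.03723 — 8 statements merged into one kernel-verified Lean document; each statement's English description precedes it below -/
import Mathlib

section
/- Clockwise travelling waves: if S is a clockwise wave state of the balanced candy sharing game with n children, then (f S) i = S (i − 1) for every i ∈ ZMod n; in particular f^[n] S = S, so S is periodic. -/
/-- The sharing map of the candy sharing game: each child with at least 2 candies
passes one candy to each neighbour. -/
def shareMap (n : ℕ) (S : ZMod n → ℕ) : ZMod n → ℕ := fun i =>
  (if 2 ≤ S i then S i - 2 else S i)
    + (if 2 ≤ S (i - 1) then 1 else 0)
    + (if 2 ≤ S (i + 1) then 1 else 0)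

/-- A state is periodic if some positive iterate of the sharing map fixes it. -/
def IsPeriodicState (n : ℕ) (S : ZMod n → ℕ) : Prop :=
  ∃ k : ℕ, 1 ≤ k ∧ (shareMap n)^[k] S = S

/-- A state is balanced if the total number of candies equals the number of children. -/
def IsBalanced (n : ℕ) [NeZero n] (S : ZMod n → ℕ) : Prop :=
  ∑ i : ZMod n, S i = n

/-- A clockwise wave state: starting from some position, the circular list of values
is a concatenation of blocks, each equal to [0,2] or [1]. -/
def IsClockwiseWave (n : ℕ) (S : ZMod n → ℕ) : Prop :=
  ∃ (a : ZMod n) (L : List (List ℕ)),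
    (∀ b ∈ L, b = [0, 2] ∨ b = [1]) ∧
    L.flatten = (List.range n).map fun j => S (a + (j : ZMod n))

/-- An anticlockwise wave state: starting from some position, the circular list of values
is a concatenation of blocks, each equal to [2,0] or [1]. -/
def IsAnticlockwiseWave (n : ℕ) (S : ZMod n → ℕ) : Prop :=
  ∃ (a : ZMod n) (L : List (List ℕ)),
    (∀ b ∈ L, b = [2, 0] ∨ b = [1]) ∧
    L.flatten = (List.range n).map fun j => S (a + (j : ZMod n))

/-- The state obtained when child `j` alone shares (assuming `2 ≤ S j`). -/
def shareAt (n : ℕ) (j : ZMod n) (S : ZMod n → ℕ) : ZMod n → ℕ := fun i =>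
  if i = j then S j - 2
  else if i = j - 1 then S (j - 1) + 1
  else if i = j + 1 then S (j + 1) + 1
  else S i

/-- The index of a state: the sum over all arcs (of length 1 to n) of their
deficiencies, where the deficiency of an arc of length k is max(0, k - (sum of the arc)). -/
def stateIndex (n : ℕ) [NeZero n] (S : ZMod n → ℕ) : ℕ :=
  ∑ i : ZMod n, ∑ k ∈ Finset.Icc 1 n, (k - ∑ j ∈ Finset.range k, S (i + (j : ZMod n)))

/-- The invariant τ of a state. -/
def tauInv (n : ℕ) [NeZero n] (S : ZMod n → ℕ) : ZMod n :=
  (if Even n then ((n / 2 : ℕ) : ZMod n) else 0)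
    + ∑ i : ZMod n, (i.val : ZMod n) * (S i : ZMod n)

/-!
Read cyclically, a concatenation of the blocks `[0, 2]` and `[1]` takes values in `{0, 1, 2}`,
and a child holds `0` exactly when its clockwise neighbour holds `2`. Under this local condition a
child with `2` candies has an empty anticlockwise neighbour and a non-sharing clockwise one, and
checking the three possible values of a child shows that it ends up with what its anticlockwise
neighbour had. The rotated state satisfies the same local condition, so the rotation repeats and
after `n` steps the state returns.
-/

def IsLocalClockwiseWave (n : ℕ) (S : ZMod n → ℕ) : Prop :=
  ∀ i, S i ≤ 2 ∧ (S i = 0 ↔ S (i + 1) = 2)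

section WaveLists

variable {L : List (List ℕ)}

theorem le_two_of_mem_flatten (hL : ∀ b ∈ L, b = [0, 2] ∨ b = [1]) :
    ∀ v ∈ L.flatten, v ≤ 2 := by
  simp only [List.mem_flatten, forall_exists_index, and_imp]
  intro v b hb hv
  rcases hL b hb with rfl | rfl <;> simp at hv <;> omega

theorem isChain_cons_flatten_append (hL : ∀ b ∈ L, b = [0, 2] ∨ b = [1])
    {x y : ℕ} (hx : x ≠ 0) (hy : y ≠ 2) :
    (x :: L.flatten ++ [y]).IsChain (fun u v => u = 0 ↔ v = 2) := by
  induction L generalizing x with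
  | nil => simp [hx, hy]
  | cons b L ih =>
    have hL' : ∀ b ∈ L, b = [0, 2] ∨ b = [1] := fun b hb => hL b (List.mem_cons_of_mem _ hb)
    rcases hL b List.mem_cons_self with rfl | rfl
    · simpa [hx] using ih hL' (x := 2) (by omega)
    · simpa [hx] using ih hL' (x := 1) (by omega)

end WaveLists

theorem IsClockwiseWave.isLocalClockwiseWave {n : ℕ} [NeZero n] {S : ZMod n → ℕ}
    (hw : IsClockwiseWave n S) : IsLocalClockwiseWave n S := by
  obtain ⟨a, L, hL, hflat⟩ := hw
  set g : ℕ → ℕ := fun j => S (a + (j : ZMod n)) with hg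
  replace hflat : L.flatten = (List.range n).map g := by
    simpa only [bind_pure_comp, List.map_eq_map, List.map_map, Function.comp_def] using hflat
  obtain ⟨m, rfl⟩ : ∃ m, n = m + 1 := Nat.exists_eq_succ_of_ne_zero (NeZero.ne n)
  have hhead : g 0 ≠ 2 := by
    have := isChain_cons_flatten_append hL one_ne_zero (y := 1) (by omega)
    rw [hflat, List.range_succ_eq_map] at this
    simp only [List.cons_append, List.map_cons, List.isChain_cons_cons] at this
    exact this.1.not.mp one_ne_zero
  have hwrap : g (m + 1) = g 0 := by simp [hg]
  have hchain : ∀ j < m + 1, g j = 0 ↔ g (j + 1) = 2 := by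
    -- closing the list with `g 0 = g (m + 1)` makes the chain condition wrap around the circle
    have := (isChain_cons_flatten_append hL one_ne_zero hhead).tail
    rw [List.cons_append, List.tail_cons, hflat, ← hwrap, ← List.map_singleton,
      ← List.map_append, ← List.range_succ, List.isChain_map, List.isChain_range_succ] at this
    exact this
  intro i
  have hi : a + (((i - a).val : ℕ) : ZMod (m + 1)) = i := by simp
  refine ⟨?_, ?_⟩
  · refine le_two_of_mem_flatten hL _ ?_
    rw [hflat, ← hi]
    exact List.mem_map_of_mem (List.mem_range.2 (ZMod.val_lt _))
  · have := hchain _ (ZMod.val_lt (i - a))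
    simp only [hg, Nat.cast_succ, ← add_assoc, hi] at this
    exact this

theorem IsLocalClockwiseWave.shareMap_apply {n : ℕ} {S : ZMod n → ℕ}
    (hS : IsLocalClockwiseWave n S) (i : ZMod n) : shareMap n S i = S (i - 1) := by
  obtain ⟨hle, hzero⟩ := hS i
  obtain ⟨hle', hzero'⟩ := hS (i - 1)
  rw [sub_add_cancel] at hzero'
  have hle_succ := (hS (i + 1)).1
  unfold shareMap
  split_ifs <;> omega

theorem IsLocalClockwiseWave.comp_sub {n : ℕ} {S : ZMod n → ℕ}
    (hS : IsLocalClockwiseWave n S) (c : ZMod n) :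
    IsLocalClockwiseWave n fun i => S (i - c) := by
  intro i
  simpa [sub_add_eq_add_sub] using hS (i - c)

theorem IsLocalClockwiseWave.iterate_shareMap {n : ℕ} {S : ZMod n → ℕ}
    (hS : IsLocalClockwiseWave n S) (k : ℕ) :
    (shareMap n)^[k] S = fun i => S (i - k) := by
  induction k with
  | zero => simp
  | succ k ih =>
    rw [Function.iterate_succ_apply', ih]
    funext i
    rw [(hS.comp_sub k).shareMap_apply]
    push_cast
    ring_nf

/-- Clockwise wave states travel clockwise: the next state is the rotation by one,
and in particular the state is periodic of period dividing n. -/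
theorem clockwise_wave_travels (n : ℕ) (hn : 3 ≤ n) (S : ZMod n → ℕ)
    (hw : IsClockwiseWave n S) :
    (∀ i : ZMod n, shareMap n S i = S (i - 1)) ∧ (shareMap n)^[n] S = S ∧
      IsPeriodicState n S := by
  have : NeZero n := ⟨by omega⟩
  have hS := hw.isLocalClockwiseWave
  have hperiod : (shareMap n)^[n] S = S := by
    simp [hS.iterate_shareMap]
  exact ⟨hS.shareMap_apply, hperiod, n, by omega, hperiod⟩
end

section
/- Anticlockwise travelling waves: if S is an anticlockwise wave state of the balanced candy sharing game with n children, then (f S) i = S (i + 1) for every i ∈ ZMod n; in particular f^[n] S = S, so S is periodic. -/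
/-!
In an anticlockwise wave every child holds at most 2 candies, and a child holds 2 exactly when
the next child (at `i + 1`) holds 0. Padding the list of blocks `[2, 0]`, `[1]` with a `1` at both
ends turns this into a chain condition whose end pairs glue to the wrap-around pair of the circle.
Under this local rule each child receives exactly what it needs to end up with its successor's
value, so one step of the game rotates the state, and `n` steps are the identity.
-/

def WaveRel (x y : ℕ) : Prop := x ≤ 2 ∧ (x = 2 ↔ y = 0)

lemma WaveRel.trans_one {x y : ℕ} (hx : WaveRel x 1) (hy : WaveRel 1 y) : WaveRel x y := by
  unfold WaveRel at *
  omega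

lemma isChain_waveRel_flatten {L : List (List ℕ)} (hL : ∀ b ∈ L, b = [2, 0] ∨ b = [1]) :
    (1 :: L.flatten ++ [1]).IsChain WaveRel := by
  induction L with
  | nil => simp [WaveRel]
  | cons b L ih =>
    have ih := ih fun b hb => hL b (List.mem_cons_of_mem _ hb)
    rcases hL b List.mem_cons_self with rfl | rfl <;>
      simp_all [List.isChain_cons, WaveRel]

lemma ZMod.forall_rel_add_one_of_forall_lt {α : Type*} {n : ℕ} [NeZero n] {R : α → α → Prop}
    {S : ZMod n → α} (a : ZMod n) (h : ∀ k < n, R (S (a + k)) (S (a + k + 1))) (j : ZMod n) :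
    R (S j) (S (j + 1)) := by
  simpa using h (j - a).val (ZMod.val_lt _)

lemma forall_waveRel_of_isChain {n : ℕ} [NeZero n] {S : ZMod n → ℕ} {a : ZMod n}
    (h : (1 :: ((List.range n).map fun k : ℕ => S (a + k)) ++ [1]).IsChain WaveRel) (j : ZMod n) :
    WaveRel (S j) (S (j + 1)) := by
  obtain ⟨m, rfl⟩ : ∃ m, n = m + 1 := Nat.exists_eq_succ_of_ne_zero (NeZero.ne n)
  rw [List.cons_append, List.isChain_cons, List.isChain_append, List.isChain_map,
    List.isChain_range] at h
  obtain ⟨hfirst, hmid, -, hlast⟩ := h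
  have hfirst : WaveRel 1 (S a) := hfirst _ (by simp [List.head?_range])
  have hlast : WaveRel (S (a + m)) 1 := hlast _ (by simp [List.getLast?_range]) _ rfl
  refine ZMod.forall_rel_add_one_of_forall_lt a (fun k hk => ?_) j
  rcases Nat.lt_succ_iff_lt_or_eq.mp hk with hk | rfl
  · simpa [add_assoc] using hmid k (by omega)
  · rw [add_assoc, ← Nat.cast_succ, ZMod.natCast_self, add_zero]
    simpa using hlast.trans_one hfirst

lemma shareMap_apply_of_forall_waveRel {n : ℕ} {S : ZMod n → ℕ}
    (h : ∀ j, WaveRel (S j) (S (j + 1))) (i : ZMod n) : shareMap n S i = S (i + 1) := by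
  have hprev := h (i - 1)
  have hi := h i
  have hnext := h (i + 1)
  rw [sub_add_cancel] at hprev
  unfold WaveRel at hprev hi hnext
  unfold shareMap
  split_ifs <;> omega

lemma shareMap_comp_add_right {n : ℕ} (S : ZMod n → ℕ) (c : ZMod n) :
    shareMap n (fun i => S (i + c)) = fun i => shareMap n S (i + c) := by
  funext i
  simp only [shareMap, sub_add_eq_add_sub, add_right_comm]

lemma iterate_shareMap_of_forall_apply {n : ℕ} {S : ZMod n → ℕ}
    (h : ∀ i, shareMap n S i = S (i + 1)) (k : ℕ) :
    (shareMap n)^[k] S = fun i => S (i + k) := by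
  induction k with
  | zero => simp
  | succ k ih =>
    rw [Function.iterate_succ_apply', ih, shareMap_comp_add_right]
    funext i
    rw [h, Nat.cast_succ, add_assoc]

/-- Anticlockwise wave states travel anticlockwise: the next state is the rotation
by minus one, and in particular the state is periodic of period dividing n. -/
theorem anticlockwise_wave_travels (n : ℕ) (hn : 3 ≤ n) (S : ZMod n → ℕ)
    (hw : IsAnticlockwiseWave n S) :
    (∀ i : ZMod n, shareMap n S i = S (i + 1)) ∧ (shareMap n)^[n] S = S ∧
      IsPeriodicState n S := by
  have : NeZero n := ⟨by omega⟩
  obtain ⟨a, L, hL, hflat⟩ := hw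
  -- `IsAnticlockwiseWave` maps over `List.range n` coerced to a list in `ZMod n`.
  have hflat' : L.flatten = (List.range n).map fun k : ℕ => S (a + k) := by
    simp only [hflat, List.bind_eq_flatMap, List.pure_def, ← List.map_eq_flatMap, List.map_map]
    rfl
  have hrotate : ∀ i, shareMap n S i = S (i + 1) :=
    shareMap_apply_of_forall_waveRel
      (forall_waveRel_of_isChain (hflat' ▸ isChain_waveRel_flatten hL))
  have hperiod : (shareMap n)^[n] S = S := by
    simp [iterate_shareMap_of_forall_apply hrotate n]
  exact ⟨hrotate, hperiod, n, by omega, hperiod⟩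
end

section
/- Rotation invariance of τ: if S is a balanced state of the balanced candy sharing game with n children and σ S is the rotated state defined by (σ S) i = S (i + 1), then τ(σ S) = τ(S). -/
theorem sum_mul_comp_add_one {R : Type*} [Ring R] [Fintype R] (f : R → R) :
    ∑ i, i * f (i + 1) = ∑ i, i * f i - ∑ i, f i := by
  rw [← Finset.sum_sub_distrib]
  exact Fintype.sum_equiv (Equiv.addRight 1) _ _ fun i => by simp [add_mul]

theorem tauInv_eq_add_sum_mul (n : ℕ) [NeZero n] (S : ZMod n → ℕ) :
    tauInv n S = (if Even n then ((n / 2 : ℕ) : ZMod n) else 0) + ∑ i, i * (S i : ZMod n) := by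
  simp only [tauInv, ZMod.natCast_zmod_val]

theorem sum_natCast_eq_zero_of_isBalanced (n : ℕ) [NeZero n] (S : ZMod n → ℕ)
    (hbal : IsBalanced n S) : ∑ i, (S i : ZMod n) = 0 := by
  rw [← Nat.cast_sum, hbal, ZMod.natCast_self]

theorem tau_rotation_invariant_general (n : ℕ) [NeZero n] (S : ZMod n → ℕ)
    (hbal : IsBalanced n S) :
    tauInv n (fun i => S (i + 1)) = tauInv n S := by
  rw [tauInv_eq_add_sum_mul, tauInv_eq_add_sum_mul,
    sum_mul_comp_add_one (fun i => (S i : ZMod n)),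
    sum_natCast_eq_zero_of_isBalanced n S hbal, sub_zero]

/-- Rotation invariance of τ for balanced states. -/
theorem tau_rotation_invariant (n : ℕ) (hn : 3 ≤ n) [NeZero n] (S : ZMod n → ℕ)
    (hbal : IsBalanced n S) :
    tauInv n (fun i => S (i + 1)) = tauInv n S :=
  tau_rotation_invariant_general n S hbal
end

section
/- Invariance of τ under sharing: for every state S : ZMod n → ℕ of the balanced candy sharing game, τ(f S) = τ(S). -/
theorem Fintype.sum_mul_discreteLaplacian_eq_zero {R : Type*} [CommRing R] [Fintype R]
    (c : R → R) : ∑ i, i * (c (i - 1) + c (i + 1) - 2 * c i) = 0 := by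
  have shift_left : ∑ i, i * c (i - 1) = ∑ i, (i + 1) * c i :=
    Fintype.sum_equiv (Equiv.subRight 1) _ _ fun i => by simp
  have shift_right : ∑ i, i * c (i + 1) = ∑ i, (i - 1) * c i :=
    Fintype.sum_equiv (Equiv.addRight 1) _ _ fun i => by simp
  calc ∑ i, i * (c (i - 1) + c (i + 1) - 2 * c i)
      = ∑ i, i * c (i - 1) + ∑ i, i * c (i + 1) - ∑ i, i * (2 * c i) := by
        simp only [mul_sub, mul_add, Finset.sum_add_distrib, Finset.sum_sub_distrib]
    _ = ∑ i, ((i + 1) * c i + (i - 1) * c i - i * (2 * c i)) := by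
        rw [shift_left, shift_right, Finset.sum_sub_distrib, Finset.sum_add_distrib]
    _ = 0 := Finset.sum_eq_zero fun i _ => by ring

def sharedCandies {n : ℕ} (R : Type*) [Ring R] (S : ZMod n → ℕ) (j : ZMod n) : R :=
  if 2 ≤ S j then 1 else 0

theorem natCast_shareMap_apply {R : Type*} [Ring R] (n : ℕ) (S : ZMod n → ℕ) (i : ZMod n) :
    (shareMap n S i : R) = S i + (sharedCandies R S (i - 1) + sharedCandies R S (i + 1)
      - 2 * sharedCandies R S i) := by
  have kept : ((if 2 ≤ S i then S i - 2 else S i : ℕ) : R) = S i - 2 * sharedCandies R S i := by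
    unfold sharedCandies
    split_ifs with hi
    · rw [Nat.cast_sub hi]; simp
    · simp
  simp only [shareMap, Nat.cast_add, kept, Nat.cast_ite, Nat.cast_one, Nat.cast_zero]
  unfold sharedCandies
  abel

theorem tau_shareMap_invariant_general (n : ℕ) [NeZero n] (S : ZMod n → ℕ) :
    tauInv n (shareMap n S) = tauInv n S := by
  unfold tauInv
  simp only [ZMod.natCast_zmod_val, natCast_shareMap_apply, mul_add, Finset.sum_add_distrib,
    Fintype.sum_mul_discreteLaplacian_eq_zero, add_zero]

/-- Invariance of τ under the sharing map. -/
theorem tau_shareMap_invariant (n : ℕ) (hn : 3 ≤ n) [NeZero n] (S : ZMod n → ℕ) :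
    tauInv n (shareMap n S) = tauInv n S :=
  tau_shareMap_invariant_general n S
end

section
/- The invariant of a clockwise wave state counts its [0,2]-blocks: if T is a clockwise wave state of the balanced candy sharing game with n children whose block decomposition contains exactly p blocks equal to [0,2], then τ(T) = p as an element of ZMod n. -/
/-!
Since `∑ i, i = -(if Even n then n / 2 else 0)` in `ZMod n`, the all-ones state has `τ = 0`, so
`τ(S) = ∑ i, i * (S i - 1)`. Reading this sum along the wave from position `a`, a `[1]`-block
contributes nothing and a `[0,2]`-block at positions `s, s + 1` contributes
`-s + (s + 1) = 1`, whatever `s` is.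
-/

open Finset

theorem ZMod.sum_range_natCast {M : Type*} [AddCommMonoid M] (n : ℕ) [NeZero n]
    (f : ZMod n → M) : ∑ j ∈ range n, f j = ∑ i, f i :=
  sum_nbij' (fun j => (j : ZMod n)) ZMod.val (fun _ _ => mem_univ _)
    (fun i _ => mem_range.mpr (ZMod.val_lt i))
    (fun _ hj => ZMod.val_cast_of_lt (mem_range.mp hj)) (fun i _ => ZMod.natCast_zmod_val i)
    (fun _ _ => rfl)

theorem ZMod.sum_range_add_natCast {M : Type*} [AddCommMonoid M] (n : ℕ) [NeZero n]
    (a : ZMod n) (f : ZMod n → M) : ∑ j ∈ range n, f (a + j) = ∑ i, f i := by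
  rw [ZMod.sum_range_natCast n (fun i => f (a + i))]
  exact Equiv.sum_comp (Equiv.addLeft a) f

theorem dvd_ite_even_half_add_sum_range (n : ℕ) :
    n ∣ (if Even n then n / 2 else 0) + ∑ j ∈ range n, j := by
  have hsum := sum_range_id_mul_two n
  rcases Nat.even_or_odd' n with ⟨m, rfl | rfl⟩
  · rw [if_pos (even_two_mul m)]
    rcases m with _ | k
    · simp
    refine ⟨k + 1, ?_⟩
    rw [show 2 * (k + 1) - 1 = 2 * k + 1 by omega] at hsum
    rw [Nat.mul_div_cancel_left _ two_pos]
    nlinarith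
  · rw [if_neg (Nat.not_even_iff_odd.mpr (odd_two_mul_add_one m))]
    refine ⟨m, ?_⟩
    rw [Nat.add_sub_cancel] at hsum
    nlinarith

theorem tauInv_one (n : ℕ) [NeZero n] : tauInv n (fun _ => 1) = 0 := by
  have h := (ZMod.natCast_eq_zero_iff _ n).mpr (dvd_ite_even_half_add_sum_range n)
  have hval : ∑ i : ZMod n, i.val = ∑ j ∈ range n, j := by
    rw [← ZMod.sum_range_natCast]
    exact sum_congr rfl fun j hj => ZMod.val_cast_of_lt (mem_range.mp hj)
  rw [← hval] at h
  simpa [tauInv, apply_ite] using h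

theorem tauInv_eq_tauInv_one_add (n : ℕ) [NeZero n] (S : ZMod n → ℕ) :
    tauInv n S = tauInv n (fun _ => 1) + ∑ i, i * ((S i : ZMod n) - 1) := by
  simp only [tauInv, Nat.cast_one, ZMod.natCast_zmod_val, add_assoc, ← sum_add_distrib]
  congr 2 with i
  ring

/-- The left-hand side is how `(List.range n).map fun j => f (j : R)` elaborates: `List.range n`
is coerced to a `List R` through the list monad. -/
theorem List.map_coe_range {R : Type} {α : Type*} [NatCast R] (f : R → α) (n : ℕ) :
    ((List.range n : List ℕ) : List R).map f = (List.range n).map fun j : ℕ => f j := by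
  simp [← List.map_eq_flatMap, Function.comp_def]

section weightedExcess

variable {R : Type*} [CommRing R]

def weightedExcess : R → List ℕ → R
  | _, [] => 0
  | s, x :: xs => s * ((x : R) - 1) + weightedExcess (s + 1) xs

theorem weightedExcess_append (s : R) (l₁ l₂ : List ℕ) :
    weightedExcess s (l₁ ++ l₂) = weightedExcess s l₁ + weightedExcess (s + l₁.length) l₂ := by
  induction l₁ generalizing s with
  | nil => simp [weightedExcess]
  | cons x xs ih =>
    simp only [List.cons_append, weightedExcess, ih, List.length_cons, Nat.cast_add_one]
    ring_nf

theorem weightedExcess_map_range (s : R) (f : ℕ → ℕ) (m : ℕ) :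
    weightedExcess s ((List.range m).map f) = ∑ j ∈ range m, (s + j) * ((f j : R) - 1) := by
  induction m with
  | zero => simp [weightedExcess]
  | succ m ih =>
    rw [List.range_succ, List.map_append, weightedExcess_append, ih, sum_range_succ]
    simp [weightedExcess]

theorem weightedExcess_zero_two (s : R) : weightedExcess s [0, 2] = 1 := by
  simp only [weightedExcess]
  push_cast
  ring

theorem weightedExcess_one (s : R) : weightedExcess s [1] = 0 := by
  simp [weightedExcess]

theorem weightedExcess_flatten (s : R) (L : List (List ℕ))
    (hL : ∀ b ∈ L, b = [0, 2] ∨ b = [1]) :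
    weightedExcess s L.flatten = L.count [0, 2] := by
  induction L generalizing s with
  | nil => simp [weightedExcess]
  | cons b L ih =>
    rw [List.flatten_cons, weightedExcess_append, ih _ fun b' hb' => hL b' (by simp [hb']),
      List.count_cons]
    rcases hL b (by simp) with rfl | rfl
    · simp [weightedExcess_zero_two, add_comm]
    · simp [weightedExcess_one]

end weightedExcess

theorem tau_clockwise_wave_general (n : ℕ) [NeZero n] (T : ZMod n → ℕ)
    (a : ZMod n) (L : List (List ℕ))
    (hblocks : ∀ b ∈ L, b = [0, 2] ∨ b = [1])
    (hjoin : L.flatten = (List.range n).map fun j => T (a + (j : ZMod n)))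
    (p : ℕ) (hp : L.count [0, 2] = p) :
    tauInv n T = (p : ZMod n) := by
  rw [tauInv_eq_tauInv_one_add, tauInv_one, zero_add, ← ZMod.sum_range_add_natCast n a, ← hp,
    ← weightedExcess_flatten a L hblocks, hjoin, List.map_coe_range, weightedExcess_map_range]

/-- The invariant τ of a clockwise wave state counts its [0,2]-blocks. -/
theorem tau_clockwise_wave (n : ℕ) (hn : 3 ≤ n) [NeZero n] (T : ZMod n → ℕ)
    (a : ZMod n) (L : List (List ℕ))
    (hblocks : ∀ b ∈ L, b = [0, 2] ∨ b = [1])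
    (hjoin : L.flatten = (List.range n).map fun j => T (a + (j : ZMod n)))
    (p : ℕ) (hp : L.count [0, 2] = p) :
    tauInv n T = (p : ZMod n) :=
  tau_clockwise_wave_general n T a L hblocks hjoin p hp
end

section
/- The invariant of an anticlockwise wave state: if T is an anticlockwise wave state of the balanced candy sharing game with n children whose block decomposition contains exactly p blocks equal to [2,0], then τ(T) = −p as an element of ZMod n. -/
open Finset

def weightedSumFrom : ℕ → List ℕ → ℕ
  | _, [] => 0
  | s, x :: xs => s * x + weightedSumFrom (s + 1) xs

theorem weightedSumFrom_append (s : ℕ) (u v : List ℕ) :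
    weightedSumFrom s (u ++ v) = weightedSumFrom s u + weightedSumFrom (s + u.length) v := by
  induction u generalizing s with
  | nil => simp [weightedSumFrom]
  | cons x xs ih =>
    simp only [List.cons_append, weightedSumFrom, ih, List.length_cons]
    rw [Nat.add_right_comm s, Nat.add_assoc]
    ac_rfl

theorem weightedSumFrom_zero_map_range (f : ℕ → ℕ) (m : ℕ) :
    weightedSumFrom 0 ((List.range m).map f) = ∑ j ∈ range m, j * f j := by
  induction m with
  | zero => rfl
  | succ m ih =>
    simp [List.range_succ, weightedSumFrom_append, ih, sum_range_succ, weightedSumFrom]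

theorem sum_flatten_eq_length {L : List (List ℕ)} (hL : ∀ b ∈ L, b = [2, 0] ∨ b = [1]) :
    L.flatten.sum = L.flatten.length := by
  induction L with
  | nil => rfl
  | cons b L ih =>
    rw [List.forall_mem_cons] at hL
    obtain ⟨rfl | rfl, hL⟩ := hL <;> simp [ih hL] <;> omega

theorem weightedSumFrom_flatten_add_count (s : ℕ) {L : List (List ℕ)}
    (hL : ∀ b ∈ L, b = [2, 0] ∨ b = [1]) :
    weightedSumFrom s L.flatten + L.count [2, 0] = ∑ j ∈ range L.flatten.length, (s + j) := by
  induction L generalizing s with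
  | nil => rfl
  | cons b L ih =>
    rw [List.forall_mem_cons] at hL
    rw [List.flatten_cons, weightedSumFrom_append, List.length_append, sum_range_add]
    simp only [← Nat.add_assoc]
    rw [← ih _ hL.2]
    obtain ⟨rfl | rfl, -⟩ := hL <;> simp [weightedSumFrom, sum_range_succ] <;> omega

theorem ZMod.sum_eq_sum_range {M : Type*} [AddCommMonoid M] (n : ℕ) [NeZero n]
    (F : ZMod n → M) : ∑ i : ZMod n, F i = ∑ j ∈ range n, F j := by
  calc ∑ i : ZMod n, F i = ∑ i : ZMod n, F (i.val : ZMod n) := by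
        simp only [ZMod.natCast_zmod_val]
    _ = ∑ j ∈ range n, F j := by
      obtain ⟨m, rfl⟩ : ∃ m, n = m + 1 := Nat.exists_eq_succ_of_ne_zero (NeZero.ne n)
      exact Fin.sum_univ_eq_sum_range (fun j => F j) _

theorem ZMod.sum_val_mul_eq (n : ℕ) [NeZero n] (g : ZMod n → ZMod n) (a : ZMod n) :
    ∑ i : ZMod n, (i.val : ZMod n) * g i
      = a * ∑ j ∈ range n, g (a + j) + ∑ j ∈ range n, (j : ZMod n) * g (a + j) := by
  simp only [ZMod.natCast_zmod_val]
  rw [← Equiv.sum_comp (Equiv.addLeft a), ZMod.sum_eq_sum_range, mul_sum, ← sum_add_distrib]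
  simp only [Equiv.coe_addLeft, add_mul]

theorem ZMod.ite_even_add_sum_range_eq_zero (n : ℕ) :
    (if Even n then ((n / 2 : ℕ) : ZMod n) else 0) + ∑ j ∈ range n, (j : ZMod n) = 0 := by
  suffices hdvd : n ∣ (if Even n then n / 2 else 0) + ∑ j ∈ range n, j by
    rw [← ZMod.natCast_eq_zero_iff] at hdvd
    push_cast [apply_ite] at hdvd
    exact hdvd
  have gauss := sum_range_id_mul_two n
  rcases Nat.even_or_odd' n with ⟨m, rfl | rfl⟩
  · refine ⟨m, ?_⟩
    rcases m with _ | m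
    · simp
    · rw [show 2 * (m + 1) - 1 = 2 * m + 1 by omega] at gauss
      simp only [even_two_mul, if_true, Nat.mul_div_cancel_left _ two_pos]
      linarith
  · refine ⟨m, ?_⟩
    rw [Nat.add_sub_cancel] at gauss
    simp only [Nat.not_even_two_mul_add_one, if_false]
    linarith

theorem tau_anticlockwise_wave_general (n : ℕ) [NeZero n] (T : ZMod n → ℕ)
    (a : ZMod n) (L : List (List ℕ))
    (hblocks : ∀ b ∈ L, b = [2, 0] ∨ b = [1])
    (hjoin : L.flatten = (List.range n).map fun j => T (a + (j : ZMod n)))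
    (p : ℕ) (hp : L.count [2, 0] = p) :
    tauInv n T = -(p : ZMod n) := by
  -- `hjoin` maps over the coerced list `↑(List.range n) : List (ZMod n)`.
  have hwave : L.flatten = (List.range n).map fun j : ℕ => T (a + j) := by
    simpa [List.map_flatMap, ← List.map_eq_flatMap, Function.comp_def] using hjoin
  have hlen : L.flatten.length = n := by simp [hwave]
  have htotal : ∑ j ∈ range n, T (a + j) = n := by
    have hsum := sum_flatten_eq_length hblocks
    rw [hlen, hwave] at hsum
    exact hsum
  have hweighted : ∑ j ∈ range n, j * T (a + j) + p = ∑ j ∈ range n, j := by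
    rw [← hp, ← weightedSumFrom_zero_map_range, ← hwave,
      weightedSumFrom_flatten_add_count 0 hblocks, hlen]
    simp only [Nat.zero_add]
  have htotal' := congrArg (Nat.cast : ℕ → ZMod n) htotal
  have hweighted' := congrArg (Nat.cast : ℕ → ZMod n) hweighted
  push_cast [ZMod.natCast_self] at htotal' hweighted'
  rw [tauInv, ZMod.sum_val_mul_eq n _ a]
  linear_combination ZMod.ite_even_add_sum_range_eq_zero n + a * htotal' + hweighted'

/-- The invariant τ of an anticlockwise wave state is minus the number of its
[2,0]-blocks. -/
theorem tau_anticlockwise_wave (n : ℕ) (hn : 3 ≤ n) [NeZero n] (T : ZMod n → ℕ)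
    (a : ZMod n) (L : List (List ℕ))
    (hblocks : ∀ b ∈ L, b = [2, 0] ∨ b = [1])
    (hjoin : L.flatten = (List.range n).map fun j => T (a + (j : ZMod n)))
    (p : ℕ) (hp : L.count [2, 0] = p) :
    tauInv n T = -(p : ZMod n) :=
  tau_anticlockwise_wave_general n T a L hblocks hjoin p hp
end

section
/- Symmetric distributions with an even number of children: let n be even, let S be a balanced state of the balanced candy sharing game with n children that is symmetric about a diameter, and let T = f^[k] S be periodic for some k. Then the canonical representative of τ(S) is 0 or n/2; if τ(S) = 0 then T i = 1 for all i, and if the representative of τ(S) is n/2 then there exists a ∈ ZMod n such that T (a + 2·j) = 0 and T (a + 2·j + 1) = 2 for every integer j with 0 ≤ j < n/2. -/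
/-!
Both the total number of candies and the moment `∑ i * S i` in `ZMod n` are preserved by sharing,
so `τ(S) = τ(T)`; sharing commutes with reflections, so `T` inherits the symmetry of `S`.

For a balanced state let `h` be its height profile (partial sums of `S - 1`). The energy
`n ∑ h² - (∑ h)²` drops at each step by `2n` times a nonnegative dissipation, which vanishes
exactly when nobody holds more than two candies and no two neighbours share at once. On a
periodic orbit the energy is constant, so every state of the orbit has this form. Then the
number of 2s can only grow, by the number of 0s neither of whose neighbours shares, so on the
orbit there are no such 0s. In these states a window `1, 0, 2` moves one step clockwise and a
window `2, 0, 1` one step anticlockwise per round; two such windows would collide, so all 0s of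
`T` face the same way. For a symmetric `T` this forces each 0 to sit between two 2s, and since a
balanced state with entries at most 2 has as many 0s as 2s, `T` alternates `0, 2`, unless it has
no 0 at all and is constantly 1. Computing `τ` of these two states finishes the proof.
-/

open Finset Function

namespace CandySharing

section Translation

variable {G M : Type*} [AddGroup G] [Fintype G] [AddCommMonoid M]

lemma sum_comp_add_const (g : G → M) (c : G) : ∑ i, g (i + c) = ∑ i, g i :=
  Equiv.sum_comp (Equiv.addRight c) g

lemma sum_comp_sub_const (g : G → M) (c : G) : ∑ i, g (i - c) = ∑ i, g i :=
  Equiv.sum_comp (Equiv.subRight c) g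

lemma sum_comp_const_sub (g : G → M) (c : G) : ∑ i, g (c - i) = ∑ i, g i :=
  Equiv.sum_comp (Equiv.subLeft c) g

end Translation

lemma sum_range_two_mul {M : Type*} [AddCommMonoid M] (G : ℕ → M) (m : ℕ) :
    ∑ t ∈ range (2 * m), G t = ∑ j ∈ range m, (G (2 * j) + G (2 * j + 1)) := by
  induction m with
  | zero => simp
  | succ m ih => rw [mul_add_one, sum_range_succ, sum_range_succ, sum_range_succ, ih, add_assoc]

section Spread

variable {ι : Type*} [Fintype ι]

/-- `card ι ^ 2` times the variance of `h`. -/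
def spread (h : ι → ℤ) : ℤ := Fintype.card ι * ∑ i, h i ^ 2 - (∑ i, h i) ^ 2

lemma spread_add_sub_const (h d : ι → ℤ) (c : ℤ) (hd : ∑ i, d i = 0) :
    spread (fun i => h i + d i - c) =
      spread h + Fintype.card ι * (2 * ∑ i, h i * d i + ∑ i, d i ^ 2) := by
  have hsq (i : ι) : (h i + d i - c) ^ 2 =
      h i ^ 2 + 2 * (h i * d i) + d i ^ 2 - 2 * c * h i - 2 * c * d i + c ^ 2 := by ring
  simp only [spread, hsq, sum_add_distrib, sum_sub_distrib, ← mul_sum, sum_const, card_univ,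
    nsmul_eq_mul, hd]
  ring

end Spread

section Orbits

variable {α β : Type*} [PartialOrder β] {f : α → α} {φ : α → β} {x : α}

lemma apply_eq_of_mem_periodicPts (hx : x ∈ periodicPts f)
    (hφ : ∀ j, φ (f^[j + 1] x) ≤ φ (f^[j] x)) : φ (f x) = φ x := by
  obtain ⟨m, hm, hper⟩ := hx
  refine le_antisymm (hφ 0) ?_
  calc φ x = φ (f^[m] x) := by rw [hper.eq]
    _ ≤ φ (f^[1] x) := antitone_nat_of_succ_le (f := fun j => φ (f^[j] x)) hφ hm

end Orbits

variable {n : ℕ} {S : ZMod n → ℕ}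

def fires (S : ZMod n → ℕ) (i : ZMod n) : ℤ := if 2 ≤ S i then 1 else 0

lemma natCast_shareMap_apply (S : ZMod n → ℕ) (i : ZMod n) :
    (shareMap n S i : ℤ) = S i - 2 * fires S i + fires S (i - 1) + fires S (i + 1) := by
  unfold shareMap fires
  split_ifs <;> push_cast <;> omega

lemma shareMap_reflect (S : ZMod n → ℕ) (c : ZMod n) :
    shareMap n (fun i => S (c - i)) = fun i => shareMap n S (c - i) := by
  funext i
  simp only [shareMap, show c - (i - 1) = c - i + 1 by abel, show c - (i + 1) = c - i - 1 by abel]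
  omega

lemma commute_shareMap_reflect (c : ZMod n) :
    Function.Commute (shareMap n) (fun S i => S (c - i)) :=
  fun S => shareMap_reflect S c

lemma iterate_shareMap_symm {c : ZMod n} (hS : ∀ i, S (c - i) = S i) (k : ℕ) (i : ZMod n) :
    (shareMap n)^[k] S (c - i) = (shareMap n)^[k] S i := by
  have h := (commute_shareMap_reflect c).iterate_left k S
  rw [funext hS] at h
  exact (congrFun h i).symm

def dissipation (S : ZMod n → ℕ) (i : ZMod n) : ℤ :=
  fires S i * (S i - 2) + fires S i * fires S (i + 1)

lemma dissipation_nonneg (S : ZMod n → ℕ) (i : ZMod n) : 0 ≤ dissipation S i := by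
  unfold dissipation fires; split_ifs <;> omega

lemma dissipation_eq_zero_iff {i : ZMod n} :
    dissipation S i = 0 ↔ S i ≤ 2 ∧ (S i < 2 ∨ S (i + 1) < 2) := by
  unfold dissipation fires; split_ifs <;> omega

lemma shareMap_eq_zero_iff (hS : ∀ i, S i < 2 ∨ S (i + 1) < 2) (i : ZMod n) :
    shareMap n S i = 0 ↔ S i = 2 ∨ S i = 0 ∧ S (i - 1) < 2 ∧ S (i + 1) < 2 := by
  have h₁ := hS (i - 1)
  have h₂ := hS i
  rw [sub_add_cancel] at h₁
  unfold shareMap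
  constructor
  · intro h; split_ifs at h <;> omega
  · intro h; split_ifs <;> omega

def IsClockwiseFront (T : ZMod n → ℕ) (i : ZMod n) : Prop :=
  T (i - 1) = 1 ∧ T i = 0 ∧ T (i + 1) = 2

def IsAnticlockwiseFront (T : ZMod n → ℕ) (i : ZMod n) : Prop :=
  T (i - 1) = 2 ∧ T i = 0 ∧ T (i + 1) = 1

lemma isAnticlockwiseFront_iff_reflect {T : ZMod n → ℕ} {i : ZMod n} (c : ZMod n) :
    IsAnticlockwiseFront T i ↔ IsClockwiseFront (fun x => T (c - x)) (c - i) := by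
  simp only [IsAnticlockwiseFront, IsClockwiseFront, show c - (c - i - 1) = i + 1 by abel,
    sub_sub_cancel, show c - (c - i + 1) = i - 1 by abel]
  constructor <;> rintro ⟨h₁, h₂, h₃⟩ <;> exact ⟨h₃, h₂, h₁⟩

lemma alternating_of_eq_zero (h02 : ∀ i, S i = 0 → S (i + 1) = 2)
    (h20 : ∀ i, S i = 2 → S (i + 1) = 0) {a : ZMod n} (ha : S a = 0) (j : ℕ) :
    S (a + 2 * j) = 0 ∧ S (a + 2 * j + 1) = 2 := by
  induction j with
  | zero => simpa using ⟨ha, h02 a ha⟩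
  | succ j ih =>
    have h0 : S (a + 2 * (j + 1 : ℕ)) = 0 := by
      rw [show a + 2 * ((j + 1 : ℕ) : ZMod n) = a + 2 * j + 1 + 1 by push_cast; ring]
      exact h20 _ ih.2
    exact ⟨h0, h02 _ h0⟩

variable [NeZero n]

lemma sum_range_natCast {M : Type*} [AddCommMonoid M] (g : ZMod n → M) :
    ∑ j ∈ range n, g j = ∑ i, g i :=
  sum_nbij' (↑) ZMod.val (by simp) (by simp [ZMod.val_lt])
    (fun _ hj => ZMod.val_cast_of_lt (mem_range.1 hj)) (fun i _ => ZMod.natCast_zmod_val i)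
    (fun _ _ => rfl)

lemma sum_shareMap (S : ZMod n → ℕ) : ∑ i, shareMap n S i = ∑ i, S i := by
  have h : ∑ i, (shareMap n S i : ℤ) = ∑ i, (S i : ℤ) := by
    simp only [natCast_shareMap_apply, sum_add_distrib, sum_sub_distrib, ← mul_sum,
      sum_comp_add_const (fires S), sum_comp_sub_const (fires S)]
    ring
  exact_mod_cast h

lemma _root_.IsBalanced.shareMap (h : IsBalanced n S) :
    IsBalanced n (shareMap n S) :=
  (sum_shareMap S).trans h

lemma _root_.IsBalanced.iterate (h : IsBalanced n S) (k : ℕ) :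
    IsBalanced n ((shareMap n)^[k] S) :=
  (congrFun (iterate_invariant (g := fun S : ZMod n → ℕ => ∑ i, S i) (funext sum_shareMap) k)
    S).trans h

lemma _root_.IsBalanced.reflect (h : IsBalanced n S) (c : ZMod n) :
    IsBalanced n (fun i => S (c - i)) :=
  (sum_comp_const_sub S c).trans h

def heightSeq (S : ZMod n → ℕ) (j : ℕ) : ℤ := ∑ t ∈ range j, ((S t : ℤ) - 1)

def height (S : ZMod n → ℕ) (i : ZMod n) : ℤ := heightSeq S i.val

def energy (S : ZMod n → ℕ) : ℤ := spread (height S)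

lemma heightSeq_periodic (hS : IsBalanced n S) : Periodic (heightSeq S) n := by
  intro j
  have hperiod : ∑ t ∈ range n, ((S (j + t : ℕ) : ℤ) - 1) = 0 := by
    have hsum : ∑ i, (S i : ℤ) = n := by exact_mod_cast hS
    push_cast
    rw [sum_range_natCast (fun i : ZMod n => (S (j + i) : ℤ) - 1), sum_sub_distrib]
    simp_rw [add_comm (j : ZMod n)]
    simp [sum_comp_add_const (fun i => (S i : ℤ)) (j : ZMod n), hsum]
  rw [heightSeq, heightSeq, sum_range_add, hperiod, add_zero]

lemma height_natCast (hS : IsBalanced n S) (j : ℕ) : height S j = heightSeq S j := by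
  rw [height, ZMod.val_natCast, (heightSeq_periodic hS).map_mod_nat]

lemma height_add_one (hS : IsBalanced n S) (i : ZMod n) :
    height S (i + 1) = height S i + (S i - 1) := by
  have hi : i + 1 = ((i.val + 1 : ℕ) : ZMod n) := by push_cast [ZMod.natCast_zmod_val]; rfl
  rw [hi, height_natCast hS, heightSeq, sum_range_succ, ZMod.natCast_zmod_val]
  rfl

lemma height_shareMap (S : ZMod n → ℕ) (i : ZMod n) :
    height (shareMap n S) i =
      height S i + (fires S i - fires S (i - 1)) - (fires S 0 - fires S (-1)) := by
  set D : ℕ → ℤ := fun t => fires S t - fires S (t - 1)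
  have hstep (t : ℕ) : ((shareMap n S t : ℤ) - 1) - ((S t : ℤ) - 1) = D (t + 1) - D t := by
    simp only [D, natCast_shareMap_apply, Nat.cast_succ, add_sub_cancel_right]
    ring
  have hdiff : heightSeq (shareMap n S) i.val - heightSeq S i.val = D i.val - D 0 := by
    rw [heightSeq, heightSeq, ← sum_sub_distrib, ← sum_range_sub D]
    exact sum_congr rfl fun t _ => hstep t
  simp only [D, ZMod.natCast_zmod_val, Nat.cast_zero, zero_sub] at hdiff
  rw [height, height]
  linarith

lemma energy_shareMap (hS : IsBalanced n S) :
    energy (shareMap n S) = energy S - 2 * n * ∑ i, dissipation S i := by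
  set d : ZMod n → ℤ := fun i => fires S i - fires S (i - 1)
  have hd : ∑ i, d i = 0 := by simp [d, sum_sub_distrib, sum_comp_sub_const (fires S)]
  have hhd : ∑ i, height S i * d i = -∑ i, ((S i : ℤ) - 1) * fires S i := by
    have hshift : ∑ i, height S i * fires S (i - 1) = ∑ i, height S (i + 1) * fires S i := by
      rw [← sum_comp_add_const _ 1]; simp
    simp only [d, mul_sub, sum_sub_distrib, hshift, height_add_one hS, add_mul,
      sum_add_distrib]
    ring
  have hdd : ∑ i, d i ^ 2 = 2 * ∑ i, fires S i - 2 * ∑ i, fires S i * fires S (i + 1) := by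
    have hsq (i : ZMod n) :
        d i ^ 2 = fires S i + fires S (i - 1) - 2 * (fires S (i - 1) * fires S i) := by
      simp only [d, fires]; split_ifs <;> norm_num
    have hshift : ∑ i, fires S (i - 1) * fires S i = ∑ i, fires S i * fires S (i + 1) := by
      rw [← sum_comp_add_const _ 1]; simp
    simp only [hsq, sum_add_distrib, sum_sub_distrib, ← mul_sum, hshift,
      sum_comp_sub_const (fires S)]
    ring
  rw [energy, energy, show height (shareMap n S) = fun i => height S i + d i - _ from
    funext (height_shareMap S), spread_add_sub_const _ _ _ hd, hhd, hdd, ZMod.card]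
  have hsplit : ∑ i, dissipation S i = ∑ i, ((S i : ℤ) - 1) * fires S i - ∑ i, fires S i
      + ∑ i, fires S i * fires S (i + 1) := by
    rw [← sum_sub_distrib, ← sum_add_distrib]
    exact sum_congr rfl fun i _ => by rw [dissipation]; ring
  rw [hsplit]
  ring

lemma energy_shareMap_le (hS : IsBalanced n S) : energy (shareMap n S) ≤ energy S := by
  have := sum_nonneg fun i (_ : i ∈ univ) => dissipation_nonneg S i
  rw [energy_shareMap hS]
  nlinarith [(Nat.cast_nonneg n : (0 : ℤ) ≤ n)]

lemma dissipation_eq_zero_of_energy_shareMap_eq (hS : IsBalanced n S)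
    (h : energy (shareMap n S) = energy S) (i : ZMod n) : dissipation S i = 0 := by
  have hn : (0 : ℤ) < n := by exact_mod_cast Nat.pos_of_neZero n
  rw [energy_shareMap hS, sub_eq_self, mul_eq_zero, or_iff_right (by positivity)] at h
  exact (sum_eq_zero_iff_of_nonneg fun i _ => dissipation_nonneg S i).1 h i (mem_univ i)

lemma card_eq_zero_eq_card_eq_two (hS : IsBalanced n S) (hle : ∀ i, S i ≤ 2) :
    #{i | S i = 0} = #{i | S i = 2} := by
  have hpt (i : ZMod n) :
      S i + (if S i = 0 then 1 else 0) = 1 + (if S i = 2 then 1 else 0) := by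
    have := hle i; split_ifs <;> omega
  have hsum := Finset.sum_congr rfl fun i (_ : i ∈ univ) => hpt i
  rw [sum_add_distrib, sum_add_distrib, hS] at hsum
  simp only [card_filter]
  simp only [sum_const, card_univ, ZMod.card, smul_eq_mul, mul_one] at hsum
  omega

lemma card_shareMap_eq_zero (hS : ∀ i, S i < 2 ∨ S (i + 1) < 2) :
    #{i | shareMap n S i = 0} =
      #{i | S i = 2} + #{i | S i = 0 ∧ S (i - 1) < 2 ∧ S (i + 1) < 2} := by
  simp only [shareMap_eq_zero_iff hS, filter_or]
  refine card_union_of_disjoint (disjoint_filter.2 fun i _ h₂ h₀ => ?_)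
  omega

lemma eq_one_of_ne_zero (hS : IsBalanced n S) (h : ∀ i, S i ≠ 0) (i : ZMod n) : S i = 1 := by
  have hsum : ∑ _i : ZMod n, 1 = ∑ i, S i := by rw [hS]; simp
  exact ((sum_eq_sum_iff_of_le fun i _ => Nat.one_le_iff_ne_zero.2 (h i)).1 hsum i
    (mem_univ i)).symm

lemma eq_zero_of_eq_two (hS : IsBalanced n S) (hle : ∀ i, S i ≤ 2)
    (hzero : ∀ i, S i = 0 → S (i - 1) = 2 ∧ S (i + 1) = 2) {i : ZMod n} (hi : S i = 2) :
    S (i - 1) = 0 ∧ S (i + 1) = 0 := by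
  have hcard := card_eq_zero_eq_card_eq_two hS hle
  have hpre (g : ZMod n → ZMod n) (hg : Injective g) (hmaps : ∀ z, S z = 0 → S (g z) = 2) :
      ∃ z, S z = 0 ∧ g z = i := by
    obtain ⟨z, hz, hzi⟩ := surjOn_of_injOn_of_card_le g
      (fun z hz => by simpa using hmaps z (by simpa using hz)) hg.injOn hcard.ge
      (by simpa using hi)
    exact ⟨z, by simpa using hz, hzi⟩
  obtain ⟨z, hz, rfl⟩ := hpre (· + 1) (add_left_injective 1) fun z hz => (hzero z hz).2
  obtain ⟨w, hw, hwi⟩ := hpre (· - 1) (sub_left_injective) fun z hz => (hzero z hz).1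
  refine ⟨by rwa [add_sub_cancel_right], ?_⟩
  rwa [← hwi, sub_add_cancel]

structure IsRecurrent (n : ℕ) [NeZero n] (T : ZMod n → ℕ) : Prop where
  mem_periodicPts : T ∈ periodicPts (shareMap n)
  isBalanced : IsBalanced n T

namespace IsRecurrent

variable {T : ZMod n → ℕ} (hT : IsRecurrent n T)
include hT

lemma apply : IsRecurrent n (shareMap n T) :=
  ⟨(bijOn_periodicPts _).mapsTo hT.1, hT.2.shareMap⟩

lemma apply_iterate (j : ℕ) : IsRecurrent n ((shareMap n)^[j] T) := by
  induction j with
  | zero => exact hT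
  | succ j ih => rw [iterate_succ_apply']; exact ih.apply

lemma exists_shareMap_eq : ∃ V, IsRecurrent n V ∧ shareMap n V = T := by
  obtain ⟨V, hV, rfl⟩ := (bijOn_periodicPts _).surjOn hT.1
  exact ⟨V, ⟨hV, (sum_shareMap V).symm.trans hT.2⟩, rfl⟩

lemma reflect (c : ZMod n) : IsRecurrent n (fun i => T (c - i)) :=
  ⟨(commute_shareMap_reflect c).symm.mapsTo_periodicPts hT.1, hT.2.reflect c⟩

lemma energy_shareMap_eq : energy (shareMap n T) = energy T :=
  apply_eq_of_mem_periodicPts hT.1 fun j => by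
    rw [iterate_succ_apply']; exact energy_shareMap_le (hT.apply_iterate j).2

lemma le_two (i : ZMod n) : T i ≤ 2 :=
  (dissipation_eq_zero_iff.1 (dissipation_eq_zero_of_energy_shareMap_eq hT.2
    hT.energy_shareMap_eq i)).1

lemma lt_two_or_lt_two (i : ZMod n) : T i < 2 ∨ T (i + 1) < 2 :=
  (dissipation_eq_zero_iff.1 (dissipation_eq_zero_of_energy_shareMap_eq hT.2
    hT.energy_shareMap_eq i)).2

lemma card_shareMap_eq_two : #{i | shareMap n T i = 2} =
    #{i | T i = 2} + #{i | T i = 0 ∧ T (i - 1) < 2 ∧ T (i + 1) < 2} := by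
  rw [← card_eq_zero_eq_card_eq_two hT.apply.2 hT.apply.le_two,
    card_shareMap_eq_zero hT.lt_two_or_lt_two]

lemma two_le_or_two_le_of_eq_zero {i : ZMod n} (hi : T i = 0) :
    2 ≤ T (i - 1) ∨ 2 ≤ T (i + 1) := by
  -- the number of 2s never decreases along the orbit, and it grows by the number of such zeros
  have hcard := apply_eq_of_mem_periodicPts (φ := fun U => OrderDual.toDual #{i | U i = 2})
    hT.1 fun j => by
      simp only [OrderDual.toDual_le_toDual, iterate_succ_apply',
        (hT.apply_iterate j).card_shareMap_eq_two]
      omega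
  simp only [hT.card_shareMap_eq_two, OrderDual.toDual_inj, add_eq_left, card_eq_zero,
    filter_eq_empty_iff] at hcard
  have := hcard (mem_univ i)
  omega

lemma eq_two_of_shareMap_eq_zero {i : ZMod n} (h : shareMap n T i = 0) : T i = 2 := by
  rcases (shareMap_eq_zero_iff hT.lt_two_or_lt_two i).1 h with h2 | ⟨h0, _, _⟩
  · exact h2
  · have := hT.two_le_or_two_le_of_eq_zero h0
    omega

lemma not_eq_zero_and_eq_zero (i : ZMod n) : ¬(T i = 0 ∧ T (i + 1) = 0) := by
  obtain ⟨V, hV, rfl⟩ := hT.exists_shareMap_eq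
  rintro ⟨h₀, h₁⟩
  have := hV.lt_two_or_lt_two i
  have := hV.eq_two_of_shareMap_eq_zero h₀
  have := hV.eq_two_of_shareMap_eq_zero h₁
  omega

lemma isClockwiseFront_apply {i : ZMod n} (h : IsClockwiseFront T i) :
    IsClockwiseFront (shareMap n T) (i + 1) := by
  obtain ⟨hl, h0, hr⟩ := h
  have h₀ : shareMap n T i = 1 := by simp [shareMap, hl, h0, hr]
  have h₁ : shareMap n T (i + 1) = 0 :=
    (shareMap_eq_zero_iff hT.lt_two_or_lt_two _).2 (.inl hr)
  have h₂ : shareMap n T (i + 1 + 1) = 2 := by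
    have hnbr := hT.apply.two_le_or_two_le_of_eq_zero h₁
    have := hT.apply.le_two (i + 1 + 1)
    rw [add_sub_cancel_right] at hnbr
    omega
  exact ⟨by rwa [add_sub_cancel_right], h₁, h₂⟩

lemma isClockwiseFront_iterate {i : ZMod n} (h : IsClockwiseFront T i) (t : ℕ) :
    IsClockwiseFront ((shareMap n)^[t] T) (i + t) := by
  induction t with
  | zero => simpa using h
  | succ t ih =>
    rw [iterate_succ_apply', Nat.cast_succ, ← add_assoc]
    exact (hT.apply_iterate t).isClockwiseFront_apply ih

lemma isAnticlockwiseFront_iterate {i : ZMod n} (h : IsAnticlockwiseFront T i) (t : ℕ) :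
    IsAnticlockwiseFront ((shareMap n)^[t] T) (i - t) := by
  rw [isAnticlockwiseFront_iff_reflect 0] at h ⊢
  have := (hT.reflect 0).isClockwiseFront_iterate h t
  rwa [(commute_shareMap_reflect 0).iterate_left t T,
    show (0 : ZMod n) - i + t = 0 - (i - t) by ring] at this

/-- Clockwise fronts advance and anticlockwise fronts retreat by one place per step, so two
fronts of opposite orientation would have to meet. -/
lemma not_isClockwiseFront_and_isAnticlockwiseFront {p q : ZMod n}
    (hq : IsClockwiseFront T q) (hp : IsAnticlockwiseFront T p) : False := by
  obtain ⟨t, ht⟩ := Nat.even_or_odd' (p - q).val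
  have hpq := ZMod.natCast_zmod_val (p - q)
  obtain ⟨-, hq0, hq2⟩ := hT.isClockwiseFront_iterate hq t
  obtain ⟨hp2, -, hp1⟩ := hT.isAnticlockwiseFront_iterate hp t
  rcases ht with ht | ht <;> rw [ht] at hpq <;> push_cast at hpq
  · rw [show p - t + 1 = q + t + 1 by linear_combination -hpq] at hp1
    omega
  · rw [show p - t - 1 = q + t by linear_combination -hpq] at hp2
    omega

lemma orientation :
    (∀ i, T i = 0 → T (i + 1) = 2) ∨ (∀ i, T i = 0 → T (i - 1) = 2) := by
  by_contra! h
  obtain ⟨⟨p, hp0, hp⟩, ⟨q, hq0, hq⟩⟩ := h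
  have hp' := hT.two_le_or_two_le_of_eq_zero hp0
  have hq' := hT.two_le_or_two_le_of_eq_zero hq0
  have hp00 := hT.not_eq_zero_and_eq_zero p
  have hq00 := hT.not_eq_zero_and_eq_zero (q - 1)
  rw [sub_add_cancel] at hq00
  have := hT.le_two (p - 1); have := hT.le_two (p + 1)
  have := hT.le_two (q - 1); have := hT.le_two (q + 1)
  exact hT.not_isClockwiseFront_and_isAnticlockwiseFront (p := p) (q := q)
    ⟨by omega, hq0, by omega⟩ ⟨by omega, hp0, by omega⟩

lemma eq_two_of_eq_zero_of_symm {c : ZMod n} (hsym : ∀ i, T (c - i) = T i) {i : ZMod n}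
    (hi : T i = 0) : T (i - 1) = 2 ∧ T (i + 1) = 2 := by
  have hi' : T (c - i) = 0 := (hsym i).trans hi
  rcases hT.orientation with h | h
  · refine ⟨?_, h i hi⟩
    have := h _ hi'
    rwa [show c - i + 1 = c - (i - 1) by ring, hsym] at this
  · refine ⟨h i hi, ?_⟩
    have := h _ hi'
    rwa [show c - i - 1 = c - (i + 1) by ring, hsym] at this

theorem eq_one_or_alternating {c : ZMod n} (hsym : ∀ i, T (c - i) = T i) :
    (∀ i, T i = 1) ∨ ∃ a, ∀ j : ℕ, T (a + 2 * j) = 0 ∧ T (a + 2 * j + 1) = 2 := by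
  have hflank := fun i => hT.eq_two_of_eq_zero_of_symm hsym (i := i)
  by_cases hz : ∃ a, T a = 0
  · obtain ⟨a, ha⟩ := hz
    exact .inr ⟨a, alternating_of_eq_zero (fun i hi => (hflank i hi).2)
      (fun i hi => (eq_zero_of_eq_two hT.2 hT.le_two hflank hi).2) ha⟩
  · exact .inl (eq_one_of_ne_zero hT.2 (not_exists.1 hz))

end IsRecurrent

def moment (S : ZMod n → ℕ) : ZMod n := ∑ i, i * S i

lemma tauInv_eq_of_even (hev : Even n) (S : ZMod n → ℕ) :
    tauInv n S = (n / 2 : ℕ) + moment S := by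
  simp [tauInv, moment, hev]

lemma moment_shareMap (S : ZMod n → ℕ) : moment (shareMap n S) = moment S := by
  have hcast (i : ZMod n) : (shareMap n S i : ZMod n) =
      S i - 2 * (fires S i : ZMod n) + (fires S (i - 1) : ZMod n)
        + (fires S (i + 1) : ZMod n) := by
    exact_mod_cast congrArg (Int.cast : ℤ → ZMod n) (natCast_shareMap_apply S i)
  have hprev : ∑ i, i * (fires S (i - 1) : ZMod n) = ∑ i, (i + 1) * (fires S i : ZMod n) := by
    rw [← sum_comp_add_const _ 1]; simp
  have hnext : ∑ i, i * (fires S (i + 1) : ZMod n) = ∑ i, (i - 1) * (fires S i : ZMod n) := by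
    rw [← sum_comp_sub_const _ 1]; simp
  simp only [moment, hcast, mul_add, mul_sub, sum_add_distrib, sum_sub_distrib, hprev, hnext]
  simp only [← sum_add_distrib, ← sum_sub_distrib]
  congr 1; ext i; ring

lemma moment_iterate (S : ZMod n → ℕ) (k : ℕ) : moment ((shareMap n)^[k] S) = moment S :=
  congrFun (iterate_invariant (g := moment) (funext moment_shareMap) k) S

lemma sum_univ_zmod_of_even (hev : Even n) : ∑ i : ZMod n, i = -((n / 2 : ℕ) : ZMod n) := by
  obtain ⟨m, rfl⟩ := hev
  have hm : 1 ≤ m := by have := NeZero.ne (m + m); omega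
  have hsum : ∑ j ∈ range (m + m), j = m * (m + m - 1) := by
    rw [sum_range_id, ← two_mul, mul_assoc, Nat.mul_div_cancel_left _ two_pos, two_mul]
  rw [← sum_range_natCast, ← Nat.cast_sum, hsum, show (m + m) / 2 = m by omega,
    Nat.cast_mul, Nat.cast_sub (by omega), eq_neg_iff_add_eq_zero]
  linear_combination (m : ZMod (m + m)) * ZMod.natCast_self (m + m)

lemma tauInv_of_forall_eq_one (hev : Even n) {T : ZMod n → ℕ} (hT : ∀ i, T i = 1) :
    tauInv n T = 0 := by
  simp [tauInv_eq_of_even hev, moment, hT, sum_univ_zmod_of_even hev]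

lemma tauInv_of_alternating (hev : Even n) {T : ZMod n → ℕ} {a : ZMod n}
    (hT : ∀ j : ℕ, T (a + 2 * j) = 0 ∧ T (a + 2 * j + 1) = 2) :
    tauInv n T = (n / 2 : ℕ) := by
  obtain ⟨m, hm⟩ := hev
  rw [tauInv_eq_of_even ⟨m, hm⟩, add_eq_left]
  have hpair (j : ℕ) : ((2 * j : ℕ) + a) * (T ((2 * j : ℕ) + a) : ZMod n)
      + ((2 * j + 1 : ℕ) + a) * (T ((2 * j + 1 : ℕ) + a) : ZMod n) = 2 * a + 2 + 4 * j := by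
    obtain ⟨h0, h2⟩ := hT j
    push_cast
    rw [add_comm _ a, h0, add_right_comm _ 1 a, add_comm _ a, h2]
    push_cast; ring
  have hzero : ((2 * m : ℕ) : ZMod n) = 0 := by
    rw [← two_mul] at hm; rw [← hm, ZMod.natCast_self]
  have hgauss : (∑ j ∈ range m, (j : ZMod n)) * 2 = m * (m - 1 : ℕ) := by
    have := congrArg (Nat.cast : ℕ → ZMod n) (sum_range_id_mul_two m)
    rwa [Nat.cast_mul, Nat.cast_mul, Nat.cast_sum, Nat.cast_ofNat] at this
  calc moment T = ∑ i, (i + a) * (T (i + a) : ZMod n) :=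
        (sum_comp_add_const (fun i => i * (T i : ZMod n)) a).symm
    _ = ∑ j ∈ range m, (2 * a + 2 + 4 * (j : ZMod n)) := by
        rw [← sum_range_natCast, show range n = range (2 * m) by rw [hm, two_mul],
          sum_range_two_mul]
        exact sum_congr rfl fun j _ => hpair j
    _ = ((2 * m : ℕ) : ZMod n) * (a + 1 + (m - 1 : ℕ)) := by
        rw [sum_add_distrib, sum_const, card_range, nsmul_eq_mul, ← mul_sum]
        push_cast
        linear_combination 2 * hgauss
    _ = 0 := by rw [hzero, zero_mul]

end CandySharing

open CandySharing in
theorem symmetric_even_outcome_general (n : ℕ) (hev : Even n) [NeZero n]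
    (S : ZMod n → ℕ) (hbal : IsBalanced n S)
    (hsym : ∃ c : ZMod n, ∀ i : ZMod n, S (c - i) = S i)
    (k : ℕ) (T : ZMod n → ℕ) (hT : T = (shareMap n)^[k] S)
    (hper : IsPeriodicState n T) :
    ((tauInv n S).val = 0 ∨ (tauInv n S).val = n / 2) ∧
      (tauInv n S = 0 → ∀ i : ZMod n, T i = 1) ∧
      ((tauInv n S).val = n / 2 →
        ∃ a : ZMod n, ∀ j : ℕ, j < n / 2 →
          T (a + 2 * (j : ZMod n)) = 0 ∧ T (a + 2 * (j : ZMod n) + 1) = 2) := by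
  obtain ⟨c, hc⟩ := hsym
  have hrec : IsRecurrent n T := ⟨hper, hT ▸ hbal.iterate k⟩
  have hτ : tauInv n S = tauInv n T := by
    rw [tauInv_eq_of_even hev, tauInv_eq_of_even hev, hT, moment_iterate]
  have hhalf : ((n / 2 : ℕ) : ZMod n).val = n / 2 :=
    ZMod.val_cast_of_lt (Nat.div_lt_self (Nat.pos_of_neZero n) one_lt_two)
  have hhalf_pos : n / 2 ≠ 0 := by
    have := NeZero.ne n
    obtain ⟨m, hm⟩ := hev
    omega
  rcases hrec.eq_one_or_alternating (hT ▸ iterate_shareMap_symm hc k) with hone | ⟨a, halt⟩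
  · rw [hτ, tauInv_of_forall_eq_one hev hone, ZMod.val_zero]
    exact ⟨.inl rfl, fun _ => hone, fun h => (hhalf_pos h.symm).elim⟩
  · rw [hτ, tauInv_of_alternating hev halt, hhalf]
    refine ⟨.inr rfl, fun h => (hhalf_pos ?_).elim, fun _ => ⟨a, fun j _ => halt j⟩⟩
    rw [← hhalf, h, ZMod.val_zero]

/-- Symmetric distributions with an even number of children: the representative of τ is
0 or n/2, and the eventual periodic state is accordingly the all-ones state or the
alternating 0,2 state up to rotation. -/
theorem symmetric_even_outcome (n : ℕ) (hn : 4 ≤ n) (hev : Even n) [NeZero n]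
    (S : ZMod n → ℕ) (hbal : IsBalanced n S)
    (hsym : ∃ c : ZMod n, ∀ i : ZMod n, S (c - i) = S i)
    (k : ℕ) (T : ZMod n → ℕ) (hT : T = (shareMap n)^[k] S)
    (hper : IsPeriodicState n T) :
    ((tauInv n S).val = 0 ∨ (tauInv n S).val = n / 2) ∧
      (tauInv n S = 0 → ∀ i : ZMod n, T i = 1) ∧
      ((tauInv n S).val = n / 2 →
        ∃ a : ZMod n, ∀ j : ℕ, j < n / 2 →
          T (a + 2 * (j : ZMod n)) = 0 ∧ T (a + 2 * (j : ZMod n) + 1) = 2) :=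
  symmetric_even_outcome_general n hev S hbal hsym k T hT hper
end

section
/- In a periodic state, two 2s are never separated only by 1s: if S is a balanced periodic state of the balanced candy sharing game with n children, then there do not exist i ∈ ZMod n and an integer k with 1 ≤ k < n such that S i = 2, S (i + k) = 2, and S (i + m) = 1 for every integer m with 0 < m < k. (In particular, a periodic state has no two adjacent entries equal to 2 and no arc of the form 2,1,2.) -/
/-!
Call the deficiency of an arc its length minus the number of candies on it. Along the orbit of
a periodic state, take an arc of maximal deficiency `M`, as short as possible, and suppose
`M ≥ 2`. One step earlier no endpoint of the arc fired, since dropping a firing endpoint would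
leave a shorter arc of deficiency at least `M`; so the arc already had deficiency `M`, and the
child just to its left did not fire. Going back through a whole period, that child never fires.
But over a period every child fires as often as the average of its two neighbours, so all
children fire equally often: nobody fires, the state consists of ones, and `M = 0`. Hence every
arc of a balanced periodic state has deficiency at most 1, whereas the arc complementary to
`2, 1, …, 1, 2` has deficiency 2.
-/

namespace ZMod

variable {n : ℕ} [NeZero n]

lemma apply_eq_of_forall_add_one {α : Type*} {g : ZMod n → α}
    (h : ∀ v, g (v + 1) = g v) (v w : ZMod n) : g v = g w := by
  have key (m : ℕ) : g (w + m) = g w := by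
    induction m with
    | zero => simp
    | succ m ih => rw [Nat.cast_succ, ← add_assoc, h, ih]
  simpa using key (v - w).val

-- The increments `F (v + 1) - F v` are all equal and add up to zero around the cycle.
lemma apply_eq_of_forall_add_eq_two_nsmul {G : Type*} [AddCommGroup G] [IsAddTorsionFree G]
    {F : ZMod n → G} (hF : ∀ v, F (v - 1) + F (v + 1) = 2 • F v) (v w : ZMod n) :
    F v = F w := by
  set d : ZMod n → G := fun v => F (v + 1) - F v
  have hd_const (v : ZMod n) : d v = d 0 := by
    refine apply_eq_of_forall_add_one (fun v => ?_) v 0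
    have := hF (v + 1)
    simp only [d, add_sub_cancel_right, add_assoc, two_nsmul] at this ⊢
    rw [sub_eq_sub_iff_add_eq_add, add_comm]
    exact this
  have hsum : ∑ v, d v = 0 := by
    simp only [d, Finset.sum_sub_distrib, sub_eq_zero]
    exact Fintype.sum_equiv (Equiv.addRight 1) _ _ fun _ => rfl
  have hd0 : d 0 = 0 := by
    simp only [hd_const, Finset.sum_const, Finset.card_univ, ZMod.card] at hsum
    exact (nsmul_eq_zero_iff_right (NeZero.ne n)).mp hsum
  refine apply_eq_of_forall_add_one (fun v => ?_) v w
  rw [← sub_eq_zero]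
  exact (hd_const v).trans hd0

end ZMod

namespace CandySharing

open Finset

variable {n : ℕ}

def firing (S : ZMod n → ℕ) (j : ZMod n) : ℤ := if 2 ≤ S j then 1 else 0

lemma firing_nonneg (S : ZMod n → ℕ) (j : ZMod n) : 0 ≤ firing S j := by
  unfold firing; split_ifs <;> norm_num

lemma firing_eq_zero_iff {S : ZMod n → ℕ} {j : ZMod n} : firing S j = 0 ↔ S j < 2 := by
  unfold firing; split_ifs <;> omega

lemma firing_of_two_le {S : ZMod n → ℕ} {j : ZMod n} (h : 2 ≤ S j) : firing S j = 1 := if_pos h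

lemma firing_of_lt_two {S : ZMod n → ℕ} {j : ZMod n} (h : S j < 2) : firing S j = 0 :=
  firing_eq_zero_iff.mpr h

lemma cast_shareMap_apply (S : ZMod n → ℕ) (i : ZMod n) :
    (shareMap n S i : ℤ) = S i - 2 * firing S i + firing S (i - 1) + firing S (i + 1) := by
  simp only [shareMap, firing]
  split_ifs <;> push_cast <;> omega

def arcSum (S : ZMod n → ℕ) (a : ZMod n) (L : ℕ) : ℤ :=
  ∑ j ∈ range L, (S (a + j) : ℤ)

def deficiency (S : ZMod n → ℕ) (a : ZMod n) (L : ℕ) : ℤ := L - arcSum S a L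

lemma deficiency_le (S : ZMod n → ℕ) (a : ZMod n) (L : ℕ) : deficiency S a L ≤ L := by
  unfold deficiency arcSum
  linarith [sum_nonneg fun j (_ : j ∈ range L) => (S (a + j)).cast_nonneg (α := ℤ)]

lemma deficiency_succ (S : ZMod n → ℕ) (a : ZMod n) (L : ℕ) :
    deficiency S a (L + 1) = deficiency S a L + 1 - S (a + L) := by
  simp only [deficiency, arcSum, sum_range_succ]
  push_cast; ring

lemma deficiency_succ' (S : ZMod n → ℕ) (a : ZMod n) (L : ℕ) :
    deficiency S a (L + 1) = deficiency S (a + 1) L + 1 - S a := by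
  simp only [deficiency, arcSum, sum_range_succ']
  push_cast
  simp only [add_assoc, add_comm (1 : ZMod n), add_zero]
  ring

lemma deficiency_add (S : ZMod n → ℕ) (a : ZMod n) (L L' : ℕ) :
    deficiency S a (L + L') = deficiency S a L + deficiency S (a + L) L' := by
  simp only [deficiency, arcSum, sum_range_add]
  push_cast
  simp only [add_assoc]
  ring

lemma deficiency_eq_zero_of_isBalanced [NeZero n] {S : ZMod n → ℕ} (hbal : IsBalanced n S)
    (a : ZMod n) : deficiency S a n = 0 := by
  have hsum : ∑ j ∈ range n, S (a + j) = ∑ x, S x :=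
    sum_nbij' (fun j => a + j) (fun x => (x - a).val) (by simp) (by simp [ZMod.val_lt])
      (fun j hj => by simp [ZMod.val_natCast_of_lt (mem_range.mp hj)]) (by simp) (by simp)
  simp only [deficiency, arcSum]
  rw [← Nat.cast_sum, hsum, hbal, sub_self]

-- A firing inside the arc only moves candies within the arc.
lemma deficiency_shareMap (S : ZMod n → ℕ) (a : ZMod n) (L : ℕ) :
    deficiency (shareMap n S) a L = deficiency S a L + firing S a + firing S (a + L - 1)
      - firing S (a - 1) - firing S (a + L) := by
  have hout := sum_range_sub (fun j : ℕ => firing S (a + j)) L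
  have hin := sum_range_sub (fun j : ℕ => firing S (a + j - 1)) L
  simp only [deficiency, arcSum, cast_shareMap_apply, sum_add_distrib, sum_sub_distrib,
    ← mul_sum]
  push_cast at hout hin ⊢
  simp only [← add_assoc, add_sub_cancel_right, add_zero, sum_sub_distrib] at hout hin ⊢
  linarith

def firingCount (S : ZMod n → ℕ) (p : ℕ) (v : ZMod n) : ℤ :=
  ∑ u ∈ range p, firing ((shareMap n)^[u] S) v

-- Over a period every child ends where it started, so it receives as much as it gives.
lemma firingCount_sub_one_add_firingCount_add_one {S : ZMod n → ℕ} {p : ℕ}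
    (hS : (shareMap n)^[p] S = S) (v : ZMod n) :
    firingCount S p (v - 1) + firingCount S p (v + 1) = 2 • firingCount S p v := by
  have h := sum_range_sub (fun u => ((shareMap n)^[u] S v : ℤ)) p
  simp only [Function.iterate_succ_apply', cast_shareMap_apply, hS,
    Function.iterate_zero_apply, sub_self] at h
  simp only [firingCount, two_nsmul, ← sum_add_distrib]
  rw [← sub_eq_zero, ← sum_sub_distrib, ← h]
  refine sum_congr rfl fun u _ => ?_
  ring

lemma lt_two_of_firingCount_eq_zero [NeZero n] {S : ZMod n → ℕ} {p : ℕ} (hp : 0 < p)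
    (hS : (shareMap n)^[p] S = S) {v : ZMod n} (hv : firingCount S p v = 0) (j : ZMod n) :
    S j < 2 := by
  have hj : firingCount S p j = 0 :=
    (ZMod.apply_eq_of_forall_add_eq_two_nsmul
      (firingCount_sub_one_add_firingCount_add_one hS) j v).trans hv
  have h0 := (sum_eq_zero_iff_of_nonneg fun u _ => firing_nonneg _ j).mp hj 0 (mem_range.mpr hp)
  exact firing_eq_zero_iff.mp h0

lemma eq_one_of_isBalanced_of_lt_two [NeZero n] {S : ZMod n → ℕ} (hbal : IsBalanced n S)
    (h : ∀ j, S j < 2) (j : ZMod n) : S j = 1 := by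
  have hsum : ∑ j, S j = ∑ _j : ZMod n, 1 := by
    rw [hbal]; simp [ZMod.card]
  exact (sum_eq_sum_iff_of_le fun j _ => Nat.lt_succ_iff.mp (h j)).mp hsum j (mem_univ j)

-- If an endpoint fired, dropping it would leave a shorter arc of deficiency at least `M`.
lemma deficiency_eq_of_le_deficiency_shareMap {U : ZMod n → ℕ} {M : ℤ} {a : ZMod n} {L : ℕ}
    (hmax : ∀ a' L', L' ≤ n → deficiency U a' L' ≤ M)
    (hmin : ∀ a' L', L' ≤ n → deficiency U a' L' = M → L ≤ L')
    (hL : 2 ≤ L) (hLn : L ≤ n) (hM : M ≤ deficiency (shareMap n U) a L) :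
    deficiency U a L = M ∧ U (a - 1) < 2 := by
  obtain ⟨m, rfl⟩ : ∃ m, L = m + 2 := ⟨L - 2, by omega⟩
  set b := a + 1 + m
  have hb : a + ((m + 2 : ℕ) : ZMod n) - 1 = b := by push_cast; ring
  have hleft := deficiency_succ' U a (m + 1)
  have hright : deficiency U a (m + 2) = deficiency U a (m + 1) + 1 - U b := by
    rw [deficiency_succ]; congr 3; push_cast; ring
  have hinner := deficiency_succ U (a + 1) m
  have hstep := deficiency_shareMap U a (m + 2)
  rw [hb] at hstep
  have hshorter (a' : ZMod n) (L' : ℕ) (hL' : L' < m + 2) : deficiency U a' L' < M :=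
    lt_of_le_of_ne (hmax a' L' (by omega)) fun h => by have := hmin a' L' (by omega) h; omega
  have hin := firing_nonneg U (a - 1)
  have hout := firing_nonneg U (a + ((m + 2 : ℕ) : ZMod n))
  by_cases hA : 2 ≤ U a <;> by_cases hB : 2 ≤ U b
  · have := hshorter (a + 1) m (by omega)
    rw [firing_of_two_le hA, firing_of_two_le hB] at hstep
    linarith
  · have := hshorter (a + 1) (m + 1) (by omega)
    rw [firing_of_two_le hA, firing_of_lt_two (by omega)] at hstep
    linarith
  · have := hshorter a (m + 1) (by omega)
    rw [firing_of_lt_two (by omega), firing_of_two_le hB] at hstep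
    linarith
  · rw [firing_of_lt_two (by omega), firing_of_lt_two (by omega)] at hstep
    have hD := hmax a (m + 2) hLn
    refine ⟨by linarith, firing_eq_zero_iff.mp ?_⟩
    linarith

theorem deficiency_le_one [NeZero n] {S : ZMod n → ℕ} (hbal : IsBalanced n S)
    (hper : IsPeriodicState n S) (a : ZMod n) {L : ℕ} (hL : L ≤ n) : deficiency S a L ≤ 1 := by
  classical
  obtain ⟨p, hp, hS⟩ := hper
  by_contra! hgt
  set orbit : ℕ → ZMod n → ℕ := fun t => (shareMap n)^[t] S with horbit
  obtain ⟨M, ⟨t₀, a₀, L₀, hL₀, hM₀⟩, hmax⟩ := Int.exists_greatest_of_bdd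
    (P := fun z => ∃ t a L, L ≤ n ∧ deficiency (orbit t) a L = z)
    ⟨n, by rintro _ ⟨t, a, L, hL, rfl⟩; exact (deficiency_le _ a L).trans (by exact_mod_cast hL)⟩
    ⟨_, 0, a, L, hL, rfl⟩
  replace hmax (t a L) (hL : L ≤ n) : deficiency (orbit t) a L ≤ M := hmax _ ⟨t, a, L, hL, rfl⟩
  have hex : ∃ L, L ≤ n ∧ ∃ t a, deficiency (orbit t) a L = M := ⟨L₀, hL₀, t₀, a₀, hM₀⟩
  obtain ⟨hℓn, t, b, hb⟩ := Nat.find_spec hex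
  set ℓ := Nat.find hex
  have hmin (t a L) (hL : L ≤ n) (h : deficiency (orbit t) a L = M) : ℓ ≤ L :=
    Nat.find_min' hex ⟨hL, t, a, h⟩
  have hM : deficiency S a L ≤ M := hmax 0 a L hL
  have hℓ : 2 ≤ ℓ := by
    have : M ≤ ℓ := hb ▸ deficiency_le (orbit t) b ℓ
    omega
  have hback (u) (h : deficiency (orbit (u + 1)) b ℓ = M) :=
    deficiency_eq_of_le_deficiency_shareMap (hmax u) (hmin u) hℓ hℓn
      (by rw [horbit, ← Function.iterate_succ_apply' (shareMap n)]; exact h.ge)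
  have hall (u) (hu : u ≤ t + p) : deficiency (orbit u) b ℓ = M := by
    refine Nat.decreasingInduction (fun u _ ih => (hback u ih).1) ?_ hu
    show deficiency ((shareMap n)^[t + p] S) b ℓ = M
    rwa [Function.iterate_add_apply, hS]
  have hidle : firingCount S p (b - 1) = 0 :=
    sum_eq_zero fun u hu => firing_of_lt_two (hback u (hall (u + 1) (by simp at hu; omega))).2
  have hone := eq_one_of_isBalanced_of_lt_two hbal (lt_two_of_firingCount_eq_zero hp hS hidle)
  have hzero : deficiency S b ℓ = 0 := by simp [deficiency, arcSum, hone]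
  have : deficiency S b ℓ = M := hall 0 (by omega)
  omega

end CandySharing

open CandySharing in
theorem periodic_no_two_twos_separated_by_ones_general (n : ℕ) [NeZero n]
    (S : ZMod n → ℕ) (hbal : IsBalanced n S) (hper : IsPeriodicState n S) :
    ¬ ∃ (i : ZMod n) (k : ℕ), 1 ≤ k ∧ k < n ∧ S i = 2 ∧ S (i + (k : ZMod n)) = 2 ∧
      ∀ m : ℕ, 0 < m → m < k → S (i + (m : ZMod n)) = 1 := by
  rintro ⟨i, k, hk, hkn, hfirst, hlast, hmid⟩
  obtain ⟨m, rfl⟩ : ∃ m, k = m + 1 := ⟨k - 1, by omega⟩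
  have hones : deficiency S (i + 1) m = 0 := by
    have h (j) (hj : j ∈ Finset.range m) : (S (i + 1 + j) : ℤ) = 1 := by
      rw [add_assoc, add_comm 1, ← Nat.cast_succ, hmid _ j.succ_pos (by simpa using hj),
        Nat.cast_one]
    simp [deficiency, arcSum, Finset.sum_congr rfl h]
  have hblock : deficiency S i (m + 2) = -2 := by
    rw [deficiency_succ, deficiency_succ', hones, hfirst, hlast]
    norm_num
  have hsplit := deficiency_add S i (m + 2) (n - (m + 2))
  rw [Nat.add_sub_cancel' hkn, deficiency_eq_zero_of_isBalanced hbal] at hsplit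
  have := deficiency_le_one hbal hper (i + (m + 2 : ℕ)) (Nat.sub_le n (m + 2))
  omega

/-- In a balanced periodic state, two 2s are never separated only by 1s. -/
theorem periodic_no_two_twos_separated_by_ones (n : ℕ) (hn : 3 ≤ n) [NeZero n]
    (S : ZMod n → ℕ) (hbal : IsBalanced n S) (hper : IsPeriodicState n S) :
    ¬ ∃ (i : ZMod n) (k : ℕ), 1 ≤ k ∧ k < n ∧ S i = 2 ∧ S (i + (k : ZMod n)) = 2 ∧
      ∀ m : ℕ, 0 < m → m < k → S (i + (m : ZMod n)) = 1 :=
  periodic_no_two_twos_separated_by_ones_general n S hbal hper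
end
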